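/- Fix an integer d ≥ 2, n ≥ 1 and k ∈ (−π,π)^d, and let λ_1(k), λ_{−1}(k) be the two roots of λ² = 2d·D̂(k)·λ − (2d−1), assumed distinct. Then the Fourier transform of the number of n-step non-backtracking walks satisfies b̂_n(k) = 2d · [ D̂(k)·(λ_1(k)^n − λ_{−1}(k)^n) + λ_{−1}(k)^{n−1} − λ_1(k)^{n−1} ] / (λ_1(k) − λ_{−1}(k)). -/
import Mathlib


open scoped BigOperators
open Matrix

noncomputable section

/-- The index set `I = {-d, …, -1, 1, …, d}`. -/
def Idx (d : ℕ) : Finset ℤ := (Finset.Icc (-(d : ℤ)) d).erase 0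

lemma mem_Idx {d : ℕ} {ι : ℤ} (h : ι ∈ Idx d) : ι ≠ 0 ∧ -(d : ℤ) ≤ ι ∧ ι ≤ d := by
  simpa [Idx, Finset.mem_erase, Finset.mem_Icc, and_assoc] using h

lemma mem_Idx' {d : ℕ} {ι : ℤ} (h1 : ι ≠ 0) (h2 : -(d : ℤ) ≤ ι) (h3 : ι ≤ d) :
    ι ∈ Idx d := by
  simp [Idx, Finset.mem_erase, Finset.mem_Icc]; omega

/-- `k_ι = sign(ι) · k_{|ι|}` (with `|ι| ∈ {1,…,d}` re-indexed as `Fin d`). -/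
def kc {d : ℕ} (k : Fin d → ℝ) (ι : Idx d) : ℝ :=
  (ι.1.sign : ℝ) * k ⟨ι.1.natAbs - 1, by
    obtain ⟨h1, h2, h3⟩ := mem_Idx ι.2; omega⟩

/-- The negation `-ι` as an element of the index set. -/
def negIdx {d : ℕ} (ι : Idx d) : Idx d :=
  ⟨-ι.1, by obtain ⟨h1, h2, h3⟩ := mem_Idx ι.2; exact mem_Idx' (by omega) (by omega) (by omega)⟩

/-- The coordinate vector `e⃗_ι ∈ ℂ^I`. -/
def eVec {d : ℕ} (ι : Idx d) : Idx d → ℂ := fun κ => if κ = ι then 1 else 0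

/-- The unit step `e_ι = sign(ι)·(basis vector |ι|)` in `ℤ^d`. -/
def stepVec {d : ℕ} (ι : Idx d) : Fin d → ℤ :=
  fun j => if (j : ℕ) = ι.1.natAbs - 1 then ι.1.sign else 0

/-- The all-ones matrix `C`. -/
def matC (d : ℕ) : Matrix (Idx d) (Idx d) ℂ := Matrix.of fun _ _ => 1

/-- The matrix `J` with `J_{ι,κ} = δ_{ι,-κ}`. -/
def matJ (d : ℕ) : Matrix (Idx d) (Idx d) ℂ :=
  Matrix.of fun ι κ => if ι.1 = -κ.1 then 1 else 0

/-- The diagonal matrix `D[k]` with entries `e^{i k_ι}`. -/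
def matD {d : ℕ} (k : Fin d → ℝ) : Matrix (Idx d) (Idx d) ℂ :=
  Matrix.diagonal fun ι => Complex.exp (Complex.I * (kc k ι : ℂ))

/-- The NBW transition matrix `A[k] = (C − J)·D[−k]`. -/
def matA {d : ℕ} (k : Fin d → ℝ) : Matrix (Idx d) (Idx d) ℂ :=
  (matC d - matJ d) * matD (-k)

/-- `ω` is an `n`-step nearest-neighbour non-backtracking walk on `ℤ^d`. -/
def IsNBW (d n : ℕ) (ω : Fin (n + 1) → (Fin d → ℤ)) : Prop :=
  ω 0 = 0 ∧
  (∀ i : ℕ, ∀ hi : i < n,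
    (∑ j, |ω ⟨i + 1, by omega⟩ j - ω ⟨i, by omega⟩ j|) = 1) ∧
  (∀ i : ℕ, ∀ hi : i + 2 ≤ n, ω ⟨i + 2, by omega⟩ ≠ ω ⟨i, by omega⟩)

/-- `b_n(x)`: the number of `n`-step NBWs ending at `x`. -/
def bc (d n : ℕ) (x : Fin d → ℤ) : ℕ :=
  Nat.card {ω : Fin (n + 1) → (Fin d → ℤ) // IsNBW d n ω ∧ ω (Fin.last n) = x}

/-- `b_n^ι(x)`: the number of `n`-step NBWs ending at `x` whose first step is not `e_ι`. -/
def bcRes (d n : ℕ) (ι : Idx d) (x : Fin d → ℤ) : ℕ :=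
  Nat.card {ω : Fin (n + 1) → (Fin d → ℤ) //
    IsNBW d n ω ∧ ω (Fin.last n) = x ∧ ∀ _ : 1 ≤ n, ω ⟨1, by omega⟩ ≠ stepVec ι}

/-- Fourier transform `f̂(k) = Σ_x f(x) e^{i k·x}` of a (finitely supported) `f : ℤ^d → ℕ`. -/
def fhat {d : ℕ} (f : (Fin d → ℤ) → ℕ) (k : Fin d → ℝ) : ℂ :=
  ∑' x : Fin d → ℤ, (f x : ℂ) * Complex.exp (Complex.I * ∑ j, (k j : ℂ) * (x j : ℂ))

/-- `b̂_n(k)`. -/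
def bhat (d n : ℕ) (k : Fin d → ℝ) : ℂ := fhat (bc d n) k

/-- `b⃗_n(k)`, the vector with entries `b̂_n^ι(k)`. -/
def bvec (d n : ℕ) (k : Fin d → ℝ) : Idx d → ℂ := fun ι => fhat (bcRes d n ι) k

/-- `D̂(k) = (1/d) Σ_j cos k_j`. -/
def Dhat {d : ℕ} (k : Fin d → ℝ) : ℝ := (1 / d) * ∑ j, Real.cos (k j)

namespace NBWaux

variable {d : ℕ}

lemma Idx_natAbs_lt (ι : Idx d) : ι.1.natAbs - 1 < d := by
  obtain ⟨h1, h2, h3⟩ := mem_Idx ι.2; omega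

lemma Idx_ne_zero (ι : Idx d) : ι.1 ≠ 0 := (mem_Idx ι.2).1

lemma negIdx_negIdx (ι : Idx d) : negIdx (negIdx ι) = ι := Subtype.ext (neg_neg _)

lemma eq_negIdx_comm {ι κ : Idx d} : ι = negIdx κ ↔ κ = negIdx ι :=
  ⟨fun h => by rw [h, negIdx_negIdx], fun h => by rw [h, negIdx_negIdx]⟩

lemma stepVec_negIdx (ι : Idx d) (j : Fin d) : stepVec (negIdx ι) j = - stepVec ι j := by
  simp only [stepVec, negIdx, Int.natAbs_neg, Int.sign_neg]
  split <;> simp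

lemma stepVec_injective : Function.Injective (stepVec (d := d)) := by
  intro ι κ h
  have h1 := congrFun h ⟨ι.1.natAbs - 1, Idx_natAbs_lt ι⟩
  simp only [stepVec] at h1
  rw [if_pos trivial] at h1
  have hs : ι.1.sign ≠ 0 := by
    simpa [Int.sign_eq_zero_iff_zero] using Idx_ne_zero ι
  by_cases hc : (ι.1.natAbs - 1 : ℕ) = κ.1.natAbs - 1
  · rw [if_pos hc] at h1
    have hι := mem_Idx ι.2
    have hκ := mem_Idx κ.2
    apply Subtype.ext
    have e1 : ι.1.sign * ι.1.natAbs = ι.1 := Int.sign_mul_natAbs ι.1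
    have e2 : κ.1.sign * κ.1.natAbs = κ.1 := Int.sign_mul_natAbs κ.1
    have hn : ι.1.natAbs = κ.1.natAbs := by omega
    rw [← e1, ← e2, h1, hn]
  · rw [if_neg hc] at h1
    exact absurd h1 hs

lemma sum_abs_stepVec (ι : Idx d) : (∑ j, |stepVec ι j|) = 1 := by
  rw [Finset.sum_eq_single (⟨ι.1.natAbs - 1, Idx_natAbs_lt ι⟩ : Fin d)]
  · simp only [stepVec, if_pos rfl]
    rcases Int.lt_or_lt_of_ne (Idx_ne_zero ι) with h | h
    · rw [Int.sign_eq_neg_one_of_neg h]; rfl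
    · rw [Int.sign_eq_one_of_pos h]; rfl
  · intro b _ hb
    simp only [stepVec]
    rw [if_neg (by simpa [Fin.ext_iff] using hb), abs_zero]
  · intro h; exact absurd (Finset.mem_univ _) h

lemma exists_stepVec {v : Fin d → ℤ} (h : (∑ j, |v j|) = 1) :
    ∃ ι : Idx d, v = stepVec ι := by
  have hnz : ∃ j, v j ≠ 0 := by
    by_contra hc
    push_neg at hc
    simp [hc] at h
  obtain ⟨j0, hj0⟩ := hnz
  have hsplit := Finset.add_sum_erase Finset.univ (fun j => |v j|) (Finset.mem_univ j0)
  have h1le : 1 ≤ |v j0| := Int.one_le_abs (by simpa using hj0)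
  have hnn : 0 ≤ ∑ j ∈ Finset.univ.erase j0, |v j| :=
    Finset.sum_nonneg fun j _ => abs_nonneg _
  have hrest : ∑ j ∈ Finset.univ.erase j0, |v j| = 0 := by linarith
  have hz : ∀ j, j ≠ j0 → v j = 0 := by
    intro j hj
    have := (Finset.sum_eq_zero_iff_of_nonneg (fun j _ => abs_nonneg (v j))).mp hrest j
      (Finset.mem_erase.mpr ⟨hj, Finset.mem_univ j⟩)
    exact abs_eq_zero.mp this
  have habs : |v j0| = 1 := by linarith
  have hd0 : (j0 : ℕ) < d := j0.isLt
  rcases (abs_eq (by norm_num)).mp habs with hv | hv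
  · refine ⟨⟨((j0 : ℕ) : ℤ) + 1, mem_Idx' (by omega) (by omega) (by omega)⟩, ?_⟩
    funext j
    simp only [stepVec]
    have hna : (((j0 : ℕ) : ℤ) + 1).natAbs = (j0 : ℕ) + 1 := by omega
    have hsg : (((j0 : ℕ) : ℤ) + 1).sign = 1 := Int.sign_eq_one_of_pos (by omega)
    rw [hna, hsg]
    by_cases hj : j = j0
    · subst hj; rw [if_pos (by omega), hv]
    · rw [if_neg (by simpa [Fin.ext_iff] using hj), hz j hj]
  · refine ⟨⟨-(((j0 : ℕ) : ℤ) + 1), mem_Idx' (by omega) (by omega) (by omega)⟩, ?_⟩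
    funext j
    simp only [stepVec]
    have hna : (-(((j0 : ℕ) : ℤ) + 1)).natAbs = (j0 : ℕ) + 1 := by omega
    have hsg : (-(((j0 : ℕ) : ℤ) + 1)).sign = -1 := Int.sign_eq_neg_one_of_neg (by omega)
    rw [hna, hsg]
    by_cases hj : j = j0
    · subst hj; rw [if_pos (by omega), hv]
    · rw [if_neg (by simpa [Fin.ext_iff] using hj), hz j hj]

end NBWaux
namespace NBWaux2
open NBWaux

variable {d : ℕ}

def kraw (k : Fin d → ℝ) (m : ℤ) : ℝ :=
  if h : m.natAbs - 1 < d then (m.sign : ℝ) * k ⟨m.natAbs - 1, h⟩ else 0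

lemma kc_eq_kraw (k : Fin d → ℝ) (ι : Idx d) : kc k ι = kraw k ι.1 := by
  unfold kc kraw
  rw [dif_pos (Idx_natAbs_lt ι)]

lemma kraw_neg (k : Fin d → ℝ) (m : ℤ) : kraw k (-m) = - kraw k m := by
  unfold kraw
  simp only [Int.natAbs_neg, Int.sign_neg]
  split
  · push_cast; ring
  · simp

lemma kc_negIdx (k : Fin d → ℝ) (ι : Idx d) : kc k (negIdx ι) = - kc k ι := by
  rw [kc_eq_kraw, kc_eq_kraw]
  exact kraw_neg k ι.1

lemma kraw_eval (k : Fin d → ℝ) (m : ℤ) (j : Fin d) (h1 : m.natAbs - 1 = (j : ℕ)) :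
    kraw k m = (m.sign : ℝ) * k j := by
  unfold kraw
  rw [dif_pos (h1 ▸ j.isLt)]
  congr 1
  exact congrArg k (Fin.ext h1)

def zf (k : Fin d → ℝ) (ι : Idx d) : ℂ := Complex.exp (Complex.I * (kc k ι : ℂ))

lemma zf_mul_zf_negIdx (k : Fin d → ℝ) (ι : Idx d) : zf k ι * zf k (negIdx ι) = 1 := by
  rw [zf, zf, ← Complex.exp_add, kc_negIdx]
  push_cast
  ring_nf
  exact Complex.exp_zero

lemma sum_k_stepVec (k : Fin d → ℝ) (ι : Idx d) :
    (∑ j, k j * (stepVec ι j : ℝ)) = kc k ι := by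
  rw [Finset.sum_eq_single (⟨ι.1.natAbs - 1, Idx_natAbs_lt ι⟩ : Fin d)]
  · simp only [stepVec, if_pos trivial]
    rw [kc]; push_cast; ring
  · intro b _ hb
    simp only [stepVec]
    rw [if_neg (by simpa [Fin.ext_iff] using hb)]
    push_cast; ring
  · intro h; exact absurd (Finset.mem_univ _) h

def idxEquiv (d : ℕ) : Fin d × Bool ≃ Idx d where
  toFun p := ⟨if p.2 then ((p.1 : ℕ) : ℤ) + 1 else -(((p.1 : ℕ) : ℤ) + 1), by
    have := p.1.isLt
    refine mem_Idx' ?_ ?_ ?_ <;> split <;> omega⟩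
  invFun ι := (⟨ι.1.natAbs - 1, Idx_natAbs_lt ι⟩, decide (0 < ι.1))
  left_inv := by
    rintro ⟨j, b⟩
    have hj := j.isLt
    apply Prod.ext
    · apply Fin.ext
      cases b <;> simp <;> omega
    · cases b <;> simp <;> omega
  right_inv := by
    intro ι
    obtain ⟨h0, hl, hr⟩ := mem_Idx ι.2
    apply Subtype.ext
    simp only []
    split_ifs with h
    · simp at h
      push_cast
      omega
    · simp at h
      push_cast
      omega

lemma kc_idxEquiv (k : Fin d → ℝ) (j : Fin d) (b : Bool) :
    kc k (idxEquiv d (j, b)) = if b then k j else - k j := by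
  rw [kc_eq_kraw]
  cases b
  · show kraw k (-(((j : ℕ) : ℤ) + 1)) = _
    rw [kraw_eval k _ j (by omega), Int.sign_eq_neg_one_of_neg (by omega)]
    norm_num
  · show kraw k (((j : ℕ) : ℤ) + 1) = _
    rw [kraw_eval k _ j (by omega), Int.sign_eq_one_of_pos (by omega)]
    norm_num

lemma card_Idx (d : ℕ) : (Idx d).card = 2 * d := by
  rw [Idx, Finset.card_erase_of_mem (by simp [Finset.mem_Icc]), Int.card_Icc]
  omega

lemma sum_one_Idx : (∑ _ι : Idx d, (1 : ℂ)) = 2 * d := by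
  rw [Finset.sum_const, Finset.card_univ, Fintype.card_coe, card_Idx]
  push_cast; ring

lemma sum_zf (hd : 0 < d) (k : Fin d → ℝ) :
    (∑ ι : Idx d, zf k ι) = 2 * d * (Dhat k : ℂ) := by
  rw [← Equiv.sum_comp (idxEquiv d) (zf k), Fintype.sum_prod_type]
  have hb : ∀ j : Fin d, (∑ b : Bool, zf k (idxEquiv d (j, b))) = 2 * Complex.cos (k j) := by
    intro j
    rw [Fintype.sum_bool]
    simp only [zf, kc_idxEquiv]
    rw [if_pos trivial, if_neg (by simp)]
    rw [show Complex.I * ((k j : ℝ) : ℂ) = ((k j : ℝ) : ℂ) * Complex.I by ring,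
        show Complex.I * ((-k j : ℝ) : ℂ) = -((k j : ℝ) : ℂ) * Complex.I by push_cast; ring,
        ← Complex.two_cos]
  rw [Finset.sum_congr rfl fun j _ => hb j]
  have : (Dhat k : ℂ) = (1 / d) * ∑ j, Complex.cos (k j) := by
    rw [Dhat]
    push_cast [Complex.ofReal_cos]
    ring
  have hdc : (d : ℂ) ≠ 0 := Nat.cast_ne_zero.mpr (by omega)
  rw [this, Finset.mul_sum, Finset.mul_sum]
  refine Finset.sum_congr rfl fun j _ => ?_
  field_simp

end NBWaux2
namespace NBWaux3
open NBWaux NBWaux2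

variable {d : ℕ}

def NBS (d n : ℕ) : Finset (Fin n → Idx d) :=
  Finset.univ.filter fun s => ∀ i j : Fin n, (j : ℕ) = (i : ℕ) + 1 → s j ≠ negIdx (s i)

lemma mem_NBS {n : ℕ} {s : Fin n → Idx d} :
    s ∈ NBS d n ↔ ∀ i j : Fin n, (j : ℕ) = (i : ℕ) + 1 → s j ≠ negIdx (s i) := by
  simp [NBS]

def endpt {n : ℕ} (s : Fin n → Idx d) : Fin d → ℤ := fun j => ∑ i, stepVec (s i) j

def walkN {n : ℕ} (s : Fin n → Idx d) (m : ℕ) (j : Fin d) : ℤ :=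
  ∑ i ∈ Finset.range m, if h : i < n then stepVec (s ⟨i, h⟩) j else 0

def walkOf {n : ℕ} (s : Fin n → Idx d) : Fin (n + 1) → Fin d → ℤ :=
  fun m j => walkN s (m : ℕ) j

lemma walkN_succ {n : ℕ} (s : Fin n → Idx d) (i : ℕ) (hi : i < n) (j : Fin d) :
    walkN s (i + 1) j = walkN s i j + stepVec (s ⟨i, hi⟩) j := by
  rw [walkN, walkN, Finset.sum_range_succ, dif_pos hi]

lemma walkN_endpt {n : ℕ} (s : Fin n → Idx d) (j : Fin d) : walkN s n j = endpt s j := by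
  rw [walkN, endpt,
    ← Fin.sum_univ_eq_sum_range (fun i => if h : i < n then stepVec (s ⟨i, h⟩) j else 0) n]
  refine Finset.sum_congr rfl fun i _ => ?_
  rw [dif_pos i.isLt]

lemma isNBW_walkOf {n : ℕ} (s : Fin n → Idx d) (hs : s ∈ NBS d n) : IsNBW d n (walkOf s) := by
  refine ⟨?_, ?_, ?_⟩
  · funext j
    simp [walkOf, walkN]
  · intro i hi
    have h1 : ∀ j : Fin d, walkOf s ⟨i + 1, by omega⟩ j - walkOf s ⟨i, by omega⟩ j
        = stepVec (s ⟨i, hi⟩) j := by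
      intro j
      show walkN s (i + 1) j - walkN s i j = _
      rw [walkN_succ s i hi]; ring
    simp only [h1]
    exact sum_abs_stepVec _
  · intro i hi heq
    have hi1 : i < n := by omega
    have hi2 : i + 1 < n := by omega
    refine mem_NBS.mp hs ⟨i, hi1⟩ ⟨i + 1, hi2⟩ rfl ?_
    apply stepVec_injective
    funext j
    have h1 : walkN s (i + 2) j = walkN s i j := congrFun heq j
    have e1 := walkN_succ s i hi1 j
    have e2' : walkN s (i + 2) j = walkN s (i + 1) j + stepVec (s ⟨i + 1, hi2⟩) j :=
      walkN_succ s (i + 1) hi2 j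
    rw [stepVec_negIdx]
    omega

lemma walkOf_last {n : ℕ} (s : Fin n → Idx d) : walkOf s (Fin.last n) = endpt s :=
  funext fun j => walkN_endpt s j

lemma walkOf_injective {n : ℕ} : Function.Injective (walkOf (d := d) (n := n)) := by
  intro s t h
  funext i
  apply stepVec_injective
  funext j
  have h1 : walkN s ((i : ℕ) + 1) j = walkN t ((i : ℕ) + 1) j :=
    congrFun (congrFun h ⟨(i : ℕ) + 1, by omega⟩) j
  have h2 : walkN s (i : ℕ) j = walkN t (i : ℕ) j :=
    congrFun (congrFun h ⟨(i : ℕ), by omega⟩) j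
  have e1 : walkN s ((i : ℕ) + 1) j = walkN s (i : ℕ) j + stepVec (s i) j :=
    walkN_succ s (i : ℕ) i.isLt j
  have e2 : walkN t ((i : ℕ) + 1) j = walkN t (i : ℕ) j + stepVec (t i) j :=
    walkN_succ t (i : ℕ) i.isLt j
  omega

lemma exists_preimage {n : ℕ} (ω : Fin (n + 1) → Fin d → ℤ) (hω : IsNBW d n ω) :
    ∃ s ∈ NBS d n, walkOf s = ω := by
  obtain ⟨h0, hstep, hnb⟩ := hω
  have hex : ∀ i : Fin n, ∃ ι : Idx d,
      (fun j => ω ⟨(i : ℕ) + 1, by omega⟩ j - ω ⟨(i : ℕ), by omega⟩ j) = stepVec ι :=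
    fun i => exists_stepVec (hstep (i : ℕ) i.isLt)
  choose s hsd using hex
  have hstep' : ∀ (i : ℕ) (hi : i < n) (j : Fin d),
      ω ⟨i + 1, by omega⟩ j - ω ⟨i, by omega⟩ j = stepVec (s ⟨i, hi⟩) j :=
    fun i hi j => congrFun (hsd ⟨i, hi⟩) j
  have hwalk : ∀ (m : ℕ) (hm : m ≤ n) (j : Fin d), walkN s m j = ω ⟨m, by omega⟩ j := by
    intro m
    induction m with
    | zero =>
      intro _ j
      simp only [walkN, Finset.range_zero, Finset.sum_empty]
      have h00 : (⟨0, by omega⟩ : Fin (n + 1)) = 0 := Fin.ext (by simp)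
      rw [h00, h0]
      rfl
    | succ m ih =>
      intro hm j
      rw [walkN_succ s m (by omega), ih (by omega), ← hstep' m (by omega) j]
      ring
  refine ⟨s, ?_, ?_⟩
  · rw [mem_NBS]
    intro i jj hji hcontra
    have hi2 : (i : ℕ) + 2 ≤ n := by omega
    apply hnb (i : ℕ) hi2
    funext j
    have hjj : jj = ⟨(i : ℕ) + 1, by omega⟩ := Fin.ext hji
    have hs2 : s ⟨(i : ℕ) + 1, by omega⟩ = negIdx (s ⟨(i : ℕ), i.isLt⟩) := hjj ▸ hcontra
    have h1 := hstep' (i : ℕ) i.isLt j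
    have h2 : ω ⟨(i : ℕ) + 2, by omega⟩ j - ω ⟨(i : ℕ) + 1, by omega⟩ j
        = stepVec (s ⟨(i : ℕ) + 1, by omega⟩) j := hstep' ((i : ℕ) + 1) (by omega) j
    rw [hs2, stepVec_negIdx] at h2
    omega
  · funext m j
    show walkN s (m : ℕ) j = ω m j
    rw [hwalk (m : ℕ) (by omega) j]

lemma bc_eq (n : ℕ) (x : Fin d → ℤ) :
    bc d n x = ((NBS d n).filter fun s => endpt s = x).card := by
  classical
  rw [bc]
  have e : {s : Fin n → Idx d // s ∈ NBS d n ∧ endpt s = x} ≃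
      {ω : Fin (n + 1) → Fin d → ℤ // IsNBW d n ω ∧ ω (Fin.last n) = x} := by
    refine Equiv.ofBijective
      (fun s => ⟨walkOf s.1, isNBW_walkOf s.1 s.2.1, by rw [walkOf_last, s.2.2]⟩) ⟨?_, ?_⟩
    · intro a b hab
      exact Subtype.ext (walkOf_injective (congrArg Subtype.val hab))
    · rintro ⟨ω, hω, hlast⟩
      obtain ⟨s, hs, hws⟩ := exists_preimage ω hω
      exact ⟨⟨s, hs, by rw [← walkOf_last, hws, hlast]⟩, Subtype.ext hws⟩
  rw [← Nat.card_congr e, Nat.card_eq_fintype_card, Fintype.card_subtype]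
  congr 1
  ext s
  simp only [Finset.mem_filter, Finset.mem_univ, true_and]

end NBWaux3
namespace NBWaux4
open NBWaux NBWaux2 NBWaux3

variable {d : ℕ}

def Wsum (d : ℕ) (k : Fin d → ℝ) (n : ℕ) : ℂ := ∑ s ∈ NBS d n, ∏ i, zf k (s i)

lemma exp_endpt (k : Fin d → ℝ) {n : ℕ} (s : Fin n → Idx d) :
    Complex.exp (Complex.I * ∑ j, (k j : ℂ) * ((endpt s j : ℤ) : ℂ)) = ∏ i, zf k (s i) := by
  have hs : (∑ j, (k j : ℂ) * ((endpt s j : ℤ) : ℂ)) = ∑ i : Fin n, ((kc k (s i) : ℝ) : ℂ) := by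
    calc (∑ j, (k j : ℂ) * ((endpt s j : ℤ) : ℂ))
        = ∑ j, ∑ i, (k j : ℂ) * ((stepVec (s i) j : ℤ) : ℂ) := by
          refine Finset.sum_congr rfl fun j _ => ?_
          rw [endpt]
          push_cast
          rw [Finset.mul_sum]
      _ = ∑ i, ∑ j, (k j : ℂ) * ((stepVec (s i) j : ℤ) : ℂ) := Finset.sum_comm
      _ = ∑ i : Fin n, ((kc k (s i) : ℝ) : ℂ) := by
          refine Finset.sum_congr rfl fun i _ => ?_
          rw [← sum_k_stepVec k (s i)]
          push_cast
          rfl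
  rw [hs, Finset.mul_sum, Complex.exp_sum]
  rfl

lemma bhat_eq_Wsum (d n : ℕ) (k : Fin d → ℝ) : bhat d n k = Wsum d k n := by
  classical
  rw [bhat, fhat]
  set g : (Fin d → ℤ) → ℂ :=
    fun x => Complex.exp (Complex.I * ∑ j, (k j : ℂ) * ((x j : ℤ) : ℂ)) with hg
  have hsupp : ∀ x ∉ (NBS d n).image endpt, ((bc d n x : ℕ) : ℂ) * g x = 0 := by
    intro x hx
    have hb : bc d n x = 0 := by
      rw [bc_eq, Finset.card_eq_zero, Finset.filter_eq_empty_iff]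
      intro s hs he
      exact hx (Finset.mem_image.mpr ⟨s, hs, he⟩)
    rw [hb]
    simp
  rw [tsum_eq_sum hsupp]
  calc ∑ x ∈ (NBS d n).image endpt, ((bc d n x : ℕ) : ℂ) * g x
      = ∑ x ∈ (NBS d n).image endpt,
          ∑ s ∈ (NBS d n).filter (fun s => endpt s = x), g (endpt s) := by
        refine Finset.sum_congr rfl fun x hx => ?_
        rw [bc_eq]
        rw [Finset.sum_congr rfl fun s hs => show g (endpt s) = g x by
          rw [(Finset.mem_filter.mp hs).2]]
        rw [Finset.sum_const, nsmul_eq_mul]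
    _ = ∑ s ∈ NBS d n, g (endpt s) :=
        Finset.sum_fiberwise_of_maps_to (fun s hs => Finset.mem_image_of_mem endpt hs)
          (fun s => g (endpt s))
    _ = Wsum d k n := Finset.sum_congr rfl fun s _ => exp_endpt k s

def Vsum (d : ℕ) (k : Fin d → ℝ) (n : ℕ) (ι : Idx d) : ℂ :=
  ∑ s ∈ (NBS d (n + 1)).filter (fun s => s (Fin.last n) = ι), ∏ i, zf k (s i)

lemma sum_Vsum (k : Fin d → ℝ) (n : ℕ) : (∑ ι : Idx d, Vsum d k n ι) = Wsum d k (n + 1) :=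
  Finset.sum_fiberwise_of_maps_to (fun s _ => Finset.mem_univ _) _

lemma NBS_one : NBS d 1 = Finset.univ := by
  ext s
  simp only [mem_NBS, Finset.mem_univ, iff_true]
  intro i j hji
  have := i.isLt
  have := j.isLt
  omega

lemma Vsum_zero (k : Fin d → ℝ) (ι : Idx d) : Vsum d k 0 ι = zf k ι := by
  rw [Vsum, NBS_one]
  have hset : (Finset.univ.filter fun s : Fin 1 → Idx d => s (Fin.last 0) = ι)
      = {fun _ => ι} := by
    ext s
    simp only [Finset.mem_filter, Finset.mem_univ, true_and, Finset.mem_singleton]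
    constructor
    · intro h
      funext i
      rw [Subsingleton.elim i (Fin.last 0), h]
    · intro h
      rw [h]
  rw [hset, Finset.sum_singleton, Fin.prod_univ_one]

lemma mem_NBS_snoc {n : ℕ} (t : Fin (n + 1) → Idx d) (ι : Idx d) :
    Fin.snoc t ι ∈ NBS d (n + 1 + 1) ↔ t ∈ NBS d (n + 1) ∧ t (Fin.last n) ≠ negIdx ι := by
  constructor
  · intro h
    constructor
    · rw [mem_NBS]
      intro i j hji hc
      refine mem_NBS.mp h i.castSucc j.castSucc (by simpa using hji) ?_
      rw [Fin.snoc_castSucc, Fin.snoc_castSucc]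
      exact hc
    · have h2 := mem_NBS.mp h (Fin.castSucc (Fin.last n)) (Fin.last (n + 1)) (by simp)
      rw [Fin.snoc_last, Fin.snoc_castSucc] at h2
      intro hc
      exact h2 (eq_negIdx_comm.mp hc)
  · rintro ⟨ht, hlast⟩
    rw [mem_NBS]
    intro i j hji
    by_cases hj : (j : ℕ) = n + 1
    · have hj' : j = Fin.last (n + 1) := Fin.ext (by simpa using hj)
      have hi' : i = Fin.castSucc (Fin.last n) := Fin.ext (by simp; omega)
      rw [hj', hi', Fin.snoc_last, Fin.snoc_castSucc]
      intro hc
      exact hlast (eq_negIdx_comm.mp hc)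
    · have hjlt : (j : ℕ) < n + 1 := by have := j.isLt; omega
      have hilt : (i : ℕ) < n + 1 := by omega
      have hj' : j = Fin.castSucc ⟨(j : ℕ), hjlt⟩ := Fin.ext (by simp)
      have hi' : i = Fin.castSucc ⟨(i : ℕ), hilt⟩ := Fin.ext (by simp)
      rw [hj', hi', Fin.snoc_castSucc, Fin.snoc_castSucc]
      exact mem_NBS.mp ht ⟨(i : ℕ), hilt⟩ ⟨(j : ℕ), hjlt⟩ (by simpa using hji)

lemma Vsum_succ (k : Fin d → ℝ) (n : ℕ) (ι : Idx d) :
    Vsum d k (n + 1) ι = zf k ι * (Wsum d k (n + 1) - Vsum d k n (negIdx ι)) := by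
  classical
  have hsplit : Wsum d k (n + 1) = Vsum d k n (negIdx ι)
      + ∑ t ∈ (NBS d (n + 1)).filter fun t => ¬t (Fin.last n) = negIdx ι, ∏ i, zf k (t i) := by
    rw [Wsum, ← Finset.sum_filter_add_sum_filter_not (NBS d (n + 1))
      (fun t => t (Fin.last n) = negIdx ι)]
    rfl
  have hbij : Vsum d k (n + 1) ι =
      ∑ t ∈ (NBS d (n + 1)).filter (fun t => ¬t (Fin.last n) = negIdx ι),
        (∏ i, zf k (t i)) * zf k ι := by
    rw [Vsum]
    refine Finset.sum_nbij' (i := fun s => Fin.init s) (j := fun t => Fin.snoc t ι)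
      ?_ ?_ ?_ ?_ ?_
    · intro s hs
      obtain ⟨hmem, hlast⟩ := Finset.mem_filter.mp hs
      have hsnoc : Fin.snoc (Fin.init s) ι = s := by
        rw [← hlast, Fin.snoc_init_self]
      rw [Finset.mem_filter]
      have := (mem_NBS_snoc (Fin.init s) ι).mp (by rw [hsnoc]; exact hmem)
      exact ⟨this.1, this.2⟩
    · intro t ht
      obtain ⟨hmem, hlast⟩ := Finset.mem_filter.mp ht
      rw [Finset.mem_filter]
      exact ⟨(mem_NBS_snoc t ι).mpr ⟨hmem, hlast⟩, by simp⟩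
    · intro s hs
      obtain ⟨hmem, hlast⟩ := Finset.mem_filter.mp hs
      rw [← hlast]
      exact Fin.snoc_init_self s
    · intro t ht
      simp
    · intro s hs
      obtain ⟨hmem, hlast⟩ := Finset.mem_filter.mp hs
      rw [Fin.prod_univ_castSucc, hlast]
      rfl
  rw [hbij, hsplit, ← Finset.sum_mul]
  ring

end NBWaux4
namespace NBWaux5
open NBWaux NBWaux2 NBWaux3 NBWaux4

variable {d : ℕ}

lemma sum_negIdx_comp (f : Idx d → ℂ) : (∑ ι : Idx d, f (negIdx ι)) = ∑ ι : Idx d, f ι := by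
  rw [← Equiv.sum_comp (Function.Involutive.toPerm negIdx negIdx_negIdx) f]
  rfl

lemma Wsum_one (k : Fin d → ℝ) : Wsum d k 1 = ∑ ι : Idx d, zf k ι := by
  rw [← sum_Vsum k 0]
  exact Finset.sum_congr rfl fun ι _ => Vsum_zero k ι

lemma Wsum_two (k : Fin d → ℝ) :
    Wsum d k (1 + 1) = (∑ ι : Idx d, zf k ι) ^ 2 - 2 * d := by
  rw [← sum_Vsum k 1]
  have h1 : ∀ ι : Idx d, Vsum d k (0 + 1) ι
      = zf k ι * (Wsum d k (0 + 1) - zf k (negIdx ι)) := by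
    intro ι
    rw [Vsum_succ k 0 ι, Vsum_zero]
  rw [Finset.sum_congr rfl fun ι _ => h1 ι]
  have h2 : Wsum d k (0 + 1) = ∑ ι : Idx d, zf k ι := Wsum_one k
  have h3 : (∑ ι : Idx d, zf k ι * (Wsum d k (0 + 1) - zf k (negIdx ι)))
      = (∑ ι : Idx d, zf k ι) * Wsum d k (0 + 1) - ∑ ι : Idx d, zf k ι * zf k (negIdx ι) := by
    rw [Finset.sum_congr rfl fun (ι : Idx d) _ =>
      show zf k ι * (Wsum d k (0 + 1) - zf k (negIdx ι))
        = zf k ι * Wsum d k (0 + 1) - zf k ι * zf k (negIdx ι) by ring]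
    rw [Finset.sum_sub_distrib, Finset.sum_mul]
  rw [h3, Finset.sum_congr rfl fun (ι : Idx d) _ => zf_mul_zf_negIdx k ι, sum_one_Idx, h2]
  ring

lemma Wsum_rec (k : Fin d → ℝ) (n : ℕ) :
    Wsum d k (n + 1 + 1 + 1) = (∑ ι : Idx d, zf k ι) * Wsum d k (n + 1 + 1)
      - (2 * d - 1) * Wsum d k (n + 1) := by
  rw [← sum_Vsum k (n + 1 + 1)]
  have h1 : ∀ ι : Idx d, Vsum d k (n + 1 + 1) ι
      = zf k ι * Wsum d k (n + 1 + 1) - zf k ι * Vsum d k (n + 1) (negIdx ι) := by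
    intro ι
    rw [Vsum_succ k (n + 1) ι]
    ring
  rw [Finset.sum_congr rfl fun ι _ => h1 ι, Finset.sum_sub_distrib, ← Finset.sum_mul]
  congr 1
  have h2 : (∑ ι : Idx d, zf k ι * Vsum d k (n + 1) (negIdx ι))
      = ∑ ι : Idx d, zf k (negIdx ι) * Vsum d k (n + 1) ι := by
    rw [← sum_negIdx_comp (fun ι => zf k (negIdx ι) * Vsum d k (n + 1) ι)]
    exact Finset.sum_congr rfl fun ι _ => by rw [negIdx_negIdx]
  rw [h2]
  have h3 : ∀ ι : Idx d, zf k (negIdx ι) * Vsum d k (n + 1) ι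
      = Wsum d k (n + 1) - Vsum d k n (negIdx ι) := by
    intro ι
    rw [Vsum_succ k n ι]
    have hz := zf_mul_zf_negIdx k ι
    linear_combination (Wsum d k (n + 1) - Vsum d k n (negIdx ι)) * hz
  rw [Finset.sum_congr rfl fun ι _ => h3 ι, Finset.sum_sub_distrib,
    sum_negIdx_comp (Vsum d k n), sum_Vsum k n, Finset.sum_const, Finset.card_univ,
    Fintype.card_coe, card_Idx, nsmul_eq_mul]
  push_cast
  ring

end NBWaux5

open NBWaux NBWaux2 NBWaux3 NBWaux4 NBWaux5

/-- if `λ₁ ≠ λ₋₁` are the roots of `λ² = 2d·D̂(k)·λ − (2d−1)`, then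
`b̂_n(k) = 2d·[D̂(k)(λ₁ⁿ − λ₋₁ⁿ) + λ₋₁^{n−1} − λ₁^{n−1}]/(λ₁ − λ₋₁)`. -/
theorem nbw_bhat_formula (d n : ℕ) (hd : 2 ≤ d) (hn : 1 ≤ n) (k : Fin d → ℝ)
    (hk : ∀ j, k j ∈ Set.Ioo (-Real.pi) Real.pi) (lam1 lam2 : ℂ)
    (h1 : lam1 ^ 2 = 2 * d * (Dhat k : ℂ) * lam1 - (2 * d - 1))
    (h2 : lam2 ^ 2 = 2 * d * (Dhat k : ℂ) * lam2 - (2 * d - 1))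
    (hne : lam1 ≠ lam2) :
    bhat d n k =
      2 * d * ((Dhat k : ℂ) * (lam1 ^ n - lam2 ^ n) + lam2 ^ (n - 1) - lam1 ^ (n - 1)) /
        (lam1 - lam2) := by
  have hZ : (∑ ι : Idx d, zf k ι) = 2 * d * (Dhat k : ℂ) := sum_zf (by omega) k
  have hsub : lam1 - lam2 ≠ 0 := sub_ne_zero.mpr hne
  have hsum : lam1 + lam2 = 2 * d * (Dhat k : ℂ) := by
    apply mul_left_cancel₀ hsub
    linear_combination h1 - h2
  have hprod : lam1 * lam2 = 2 * d - 1 := by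
    linear_combination lam1 * hsum - h1
  have hW : ∀ m : ℕ, Wsum d k (m + 1) * (lam1 - lam2)
      = lam1 ^ (m + 2) - lam2 ^ (m + 2) - lam1 ^ m + lam2 ^ m := by
    intro m
    induction m using Nat.strong_induction_on with
    | _ m ih =>
      match m with
      | 0 =>
        rw [show (0 : ℕ) + 1 = 1 from rfl, Wsum_one k, hZ]
        linear_combination (lam2 - lam1) * hsum
      | 1 =>
        rw [Wsum_two k, hZ]
        linear_combination (-(lam1 + lam2 + 2 * d * (Dhat k : ℂ)) * (lam1 - lam2)) * hsum
          + (lam1 - lam2) * hprod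
      | (mm + 2) =>
        have e1 := ih (mm + 1) (by omega)
        have e2 := ih mm (by omega)
        rw [show mm + 2 + 1 = mm + 1 + 1 + 1 from rfl, Wsum_rec k mm, hZ]
        linear_combination (2 * (d : ℂ) * (Dhat k : ℂ)) * e1 - (2 * (d : ℂ) - 1) * e2
          - (lam1 ^ (mm + 3) - lam2 ^ (mm + 3) - lam1 ^ (mm + 1) + lam2 ^ (mm + 1)) * hsum
          + (lam1 ^ (mm + 2) - lam2 ^ (mm + 2) - lam1 ^ mm + lam2 ^ mm) * hprod
  obtain ⟨m, rfl⟩ : ∃ m, n = m + 1 := ⟨n - 1, by omega⟩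
  rw [bhat_eq_Wsum, eq_div_iff hsub, Nat.add_sub_cancel, hW m]
  linear_combination (lam1 ^ (m + 1) - lam2 ^ (m + 1)) * hsum + (lam2 ^ m - lam1 ^ m) * hprod

end
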